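/- arXiv:2211.04853 — 2 statements merged into one kernel-verified Lean document; each statement's English description precedes it below -/
import Mathlib

section
/- Suppose x, y : ℤ → ℝ satisfy, for all m ≥ 0, x(m+1) = c(m)·x(m-τ) + h(m) and y(m+1) = c(m)·y(m-τ) + g(m), where |h(m) - g(m)| ≤ H(m)·D(m) for some nonnegative functions H, D, and |x(j) - y(j)| ≤ A for all j ∈ [-τ, 0]. Then for every s ∈ {0,...,τ} and n ≥ 1, |x(n(τ+1)-s) - y(n(τ+1)-s)| ≤ (∏_{k=0}^{n-1} |c(k(τ+1)+τ-s)|)·A + Σ_{l=0}^{n-1} (∏_{k=l+1}^{n-1} |c(k(τ+1)+τ-s)|)·H(l(τ+1)+τ-s)·D(l(τ+1)+τ-s). -/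
/-- scalar version of Lemma 2.2 of the paper. -/
theorem difference_of_solutions_estimate
    (τ : ℕ) (c : ℕ → ℝ) (H D : ℕ → ℝ) (A : ℝ)
    (hH : ∀ m, 0 ≤ H m) (hD : ∀ m, 0 ≤ D m) (hA : 0 ≤ A)
    (x y : ℤ → ℝ) (h g : ℕ → ℝ)
    (hx : ∀ m : ℕ, x (m + 1) = c m * x ((m : ℤ) - τ) + h m)
    (hy : ∀ m : ℕ, y (m + 1) = c m * y ((m : ℤ) - τ) + g m)
    (hhg : ∀ m : ℕ, |h m - g m| ≤ H m * D m)
    (hinit : ∀ j : ℤ, -(τ : ℤ) ≤ j → j ≤ 0 → |x j - y j| ≤ A) :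
    ∀ s : ℕ, s ≤ τ → ∀ n : ℕ, 1 ≤ n →
      |x ((n : ℤ) * (τ + 1) - s) - y ((n : ℤ) * (τ + 1) - s)| ≤
        (∏ k ∈ Finset.range n, |c (k * (τ + 1) + τ - s)|) * A +
        ∑ l ∈ Finset.range n,
          (∏ k ∈ Finset.Ico (l + 1) n, |c (k * (τ + 1) + τ - s)|) *
            H (l * (τ + 1) + τ - s) * D (l * (τ + 1) + τ - s) := by
  intro s hs
  have key : ∀ n : ℕ,
      |x ((n : ℤ) * (τ + 1) - s) - y ((n : ℤ) * (τ + 1) - s)| ≤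
        (∏ k ∈ Finset.range n, |c (k * (τ + 1) + τ - s)|) * A +
        ∑ l ∈ Finset.range n,
          (∏ k ∈ Finset.Ico (l + 1) n, |c (k * (τ + 1) + τ - s)|) *
            H (l * (τ + 1) + τ - s) * D (l * (τ + 1) + τ - s) := by
    intro n
    induction n with
    | zero =>
      simp only [Finset.range_zero, Finset.prod_empty, Finset.sum_empty, one_mul,
        Nat.cast_zero, zero_mul, zero_sub, add_zero]
      exact hinit (-(s : ℤ)) (by omega) (by omega)
    | succ n ih =>
      have hsub : s ≤ n * (τ + 1) + τ := le_trans hs (Nat.le_add_left τ _)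
      have hmz : ((n * (τ + 1) + τ - s : ℕ) : ℤ) = (n : ℤ) * (τ + 1) + τ - s := by
        push_cast [hsub]; ring
      have hidx1 : ((n : ℤ) + 1) * (τ + 1) - s = ((n * (τ + 1) + τ - s : ℕ) : ℤ) + 1 := by
        rw [hmz]; ring
      have hidx2 : (n : ℤ) * (τ + 1) - s = ((n * (τ + 1) + τ - s : ℕ) : ℤ) - τ := by
        rw [hmz]; ring
      have hdiff : x (((n * (τ + 1) + τ - s : ℕ) : ℤ) + 1) - y (((n * (τ + 1) + τ - s : ℕ) : ℤ) + 1)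
          = c (n * (τ + 1) + τ - s) * (x (((n * (τ + 1) + τ - s : ℕ) : ℤ) - τ)
              - y (((n * (τ + 1) + τ - s : ℕ) : ℤ) - τ))
            + (h (n * (τ + 1) + τ - s) - g (n * (τ + 1) + τ - s)) := by
        rw [hx (n * (τ + 1) + τ - s), hy (n * (τ + 1) + τ - s)]; ring
      have hbound : |x (((n * (τ + 1) + τ - s : ℕ) : ℤ) + 1) - y (((n * (τ + 1) + τ - s : ℕ) : ℤ) + 1)|
          ≤ |c (n * (τ + 1) + τ - s)| * |x ((n : ℤ) * (τ + 1) - s) - y ((n : ℤ) * (τ + 1) - s)|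
            + H (n * (τ + 1) + τ - s) * D (n * (τ + 1) + τ - s) := by
        rw [hdiff, hidx2]
        exact (abs_add_le _ _).trans (by
          rw [abs_mul]
          exact add_le_add le_rfl (hhg _))
      have hsum : ∑ l ∈ Finset.range n,
            (∏ k ∈ Finset.Ico (l + 1) (n + 1), |c (k * (τ + 1) + τ - s)|) *
              H (l * (τ + 1) + τ - s) * D (l * (τ + 1) + τ - s)
          = ∑ l ∈ Finset.range n,
            |c (n * (τ + 1) + τ - s)| *
              ((∏ k ∈ Finset.Ico (l + 1) n, |c (k * (τ + 1) + τ - s)|) *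
                H (l * (τ + 1) + τ - s) * D (l * (τ + 1) + τ - s)) := by
        refine Finset.sum_congr rfl fun l hl => ?_
        have hl' : l + 1 ≤ n := Finset.mem_range.mp hl
        rw [Finset.prod_Ico_succ_top hl']
        ring
      calc |x (((n : ℕ) + 1 : ℤ) * (τ + 1) - s) - y (((n : ℕ) + 1 : ℤ) * (τ + 1) - s)|
          = |x (((n * (τ + 1) + τ - s : ℕ) : ℤ) + 1) - y (((n * (τ + 1) + τ - s : ℕ) : ℤ) + 1)| := by
            rw [hidx1]
        _ ≤ |c (n * (τ + 1) + τ - s)| * |x ((n : ℤ) * (τ + 1) - s) - y ((n : ℤ) * (τ + 1) - s)|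
            + H (n * (τ + 1) + τ - s) * D (n * (τ + 1) + τ - s) := hbound
        _ ≤ |c (n * (τ + 1) + τ - s)| *
              ((∏ k ∈ Finset.range n, |c (k * (τ + 1) + τ - s)|) * A +
                ∑ l ∈ Finset.range n,
                  (∏ k ∈ Finset.Ico (l + 1) n, |c (k * (τ + 1) + τ - s)|) *
                    H (l * (τ + 1) + τ - s) * D (l * (τ + 1) + τ - s))
            + H (n * (τ + 1) + τ - s) * D (n * (τ + 1) + τ - s) := by
            gcongr
        _ = (∏ k ∈ Finset.range (n + 1), |c (k * (τ + 1) + τ - s)|) * A +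
            ∑ l ∈ Finset.range (n + 1),
              (∏ k ∈ Finset.Ico (l + 1) (n + 1), |c (k * (τ + 1) + τ - s)|) *
                H (l * (τ + 1) + τ - s) * D (l * (τ + 1) + τ - s) := by
            rw [Finset.prod_range_succ, Finset.sum_range_succ, hsum,
              Finset.Ico_self, Finset.prod_empty, mul_add, Finset.mul_sum]
            ring
  exact fun n _ => key n
end

section
/- Consider the scalar delay difference equation x(m+1) = c(m)x(m-τ) + h(m, x_m), m ≥ 0, where c : ℕ → ℝ satisfies |c(m)| ≤ c for a constant c ∈ (0,1], h satisfies the Lipschitz bound |h(m,α) - h(m,β)| ≤ H(m)‖α - β‖ for histories α, β, and the quantity λ := max_{s=0,...,τ} sup_{n≥1} Σ_{l=0}^{n-1} (∏_{k=l+1}^{n-1} |c(k(τ+1)+τ-s)|) H(l(τ+1)+τ-s) c^{l + (r-s-1)/(τ+1) - n + 1} satisfies λ < 1. Then for any two solutions x, y with initial histories α, β one has ‖x_m - y_m‖ ≤ (c^{r/(τ+1) - 1}/(1-λ)) (c^{1/(τ+1)})^m ‖α - β‖ for all m ≥ 0. -/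
/-!
For `z = x - y` the Lipschitz bound gives `|z (m+1)| ≤ |c m| |z (m-τ)| + H m ‖z_m‖`. Along a
residue class `t = n (τ+1) - s` (`0 ≤ s ≤ τ`) this is a first-order linear inequality in `n`,
which unrolls by variation of constants. Strong induction then gives the pointwise bound
`|z t| ≤ c^(t/(τ+1) - 1) ‖z_0‖ / (1 - λ)` for `t ≥ r`: inserted into the unrolled inequality it
produces exactly the sum controlled by `λ`. As the bound decreases in `t`, its value at `m + r`
bounds the whole window `[m + r, m]`.
-/

open Finset

theorem le_prod_mul_add_sum_of_le_mul_add {w a e : ℕ → ℝ} (ha : ∀ n, 0 ≤ a n)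
    (hw : ∀ n, w (n + 1) ≤ a n * w n + e n) (n : ℕ) :
    w n ≤ (∏ k ∈ range n, a k) * w 0 + ∑ l ∈ range n, (∏ k ∈ Ico (l + 1) n, a k) * e l := by
  induction n with
  | zero => simp
  | succ n ih =>
    have hsum : ∑ l ∈ range (n + 1), (∏ k ∈ Ico (l + 1) (n + 1), a k) * e l
        = a n * ∑ l ∈ range n, (∏ k ∈ Ico (l + 1) n, a k) * e l + e n := by
      rw [sum_range_succ, Ico_self, prod_empty, one_mul, mul_sum]
      congr 1
      refine sum_congr rfl fun l hl => ?_
      rw [prod_Ico_succ_top (mem_range.mp hl)]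
      ring
    calc w (n + 1) ≤ a n * w n + e n := hw n
      _ ≤ a n * ((∏ k ∈ range n, a k) * w 0 +
            ∑ l ∈ range n, (∏ k ∈ Ico (l + 1) n, a k) * e l) + e n := by
        gcongr
        exact ha n
      _ = _ := by rw [hsum, prod_range_succ]; ring

theorem nonneg_of_abs_sub_le_mul_norm {E : Type*} [NormedAddCommGroup E] [Nontrivial E]
    {f : E → ℝ} {L : ℝ} (hf : ∀ u v, |f u - f v| ≤ L * ‖u - v‖) : 0 ≤ L := by
  obtain ⟨v, hv⟩ := exists_ne (0 : E)
  have hL := (abs_nonneg _).trans (hf v 0)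
  rw [sub_zero] at hL
  exact nonneg_of_mul_nonneg_left hL (norm_pos_iff.mpr hv)

theorem exists_add_eq_mul_succ (q τ : ℕ) : ∃ n s, s ≤ τ ∧ q + s = n * (τ + 1) := by
  have hdiv := Nat.div_add_mod (q + τ) (τ + 1)
  have hmod := Nat.mod_lt (q + τ) (by omega : 0 < τ + 1)
  exact ⟨(q + τ) / (τ + 1), τ - (q + τ) % (τ + 1), by omega, by rw [mul_comm]; omega⟩

def history (r : ℤ) (x : ℤ → ℝ) (m : ℤ) : Icc r (0 : ℤ) → ℝ := fun j => x (m + j)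

section History

variable {r : ℤ}

theorem abs_le_norm_history (x : ℤ → ℝ) (m : ℤ) {j : ℤ} (hrj : r ≤ j) (hj : j ≤ 0) :
    |x (m + j)| ≤ ‖history r x m‖ :=
  norm_le_pi_norm (history r x m) ⟨j, mem_Icc.mpr ⟨hrj, hj⟩⟩

theorem norm_history_le {x : ℤ → ℝ} {m : ℤ} {B : ℝ} (hB : 0 ≤ B)
    (hx : ∀ j, r ≤ j → j ≤ 0 → |x (m + j)| ≤ B) : ‖history r x m‖ ≤ B :=
  (pi_norm_le_iff_of_nonneg hB).mpr fun j => hx j (mem_Icc.mp j.2).1 (mem_Icc.mp j.2).2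

theorem abs_sub_apply_succ_le {τ : ℕ} {c H : ℕ → ℝ} {h : ℕ → (Icc r (0 : ℤ) → ℝ) → ℝ}
    (hLip : ∀ m α β, |h m α - h m β| ≤ H m * ‖α - β‖) {x y : ℤ → ℝ}
    (hx : ∀ m : ℕ, x (m + 1) = c m * x (m - τ) + h m (history r x m))
    (hy : ∀ m : ℕ, y (m + 1) = c m * y (m - τ) + h m (history r y m)) (m : ℕ) :
    |(x - y) (m + 1)| ≤ |c m| * |(x - y) (m - τ)| + H m * ‖history r (x - y) m‖ := by
  have hxy : (x - y) (m + 1) =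
      c m * (x - y) (m - τ) + (h m (history r x m) - h m (history r y m)) := by
    simp only [Pi.sub_apply, hx, hy]; ring
  rw [hxy, ← abs_mul]
  exact (abs_add_le _ _).trans (add_le_add le_rfl (hLip m _ _))

end History

noncomputable def decayBound (τ : ℕ) (cbar lam D₀ : ℝ) (t : ℤ) : ℝ :=
  cbar ^ ((t : ℝ) / (τ + 1) - 1) / (1 - lam) * D₀

section DecayBound

variable {τ : ℕ} {cbar lam D₀ : ℝ}

theorem decayBound_nonneg (hc0 : 0 < cbar) (hlam : lam < 1) (hD₀ : 0 ≤ D₀) (t : ℤ) :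
    0 ≤ decayBound τ cbar lam D₀ t :=
  mul_nonneg (div_nonneg (Real.rpow_nonneg hc0.le _) (sub_nonneg.mpr hlam.le)) hD₀

theorem decayBound_le_of_le (hc0 : 0 < cbar) (hc1 : cbar ≤ 1) (hlam : lam < 1) (hD₀ : 0 ≤ D₀)
    {t t' : ℤ} (htt' : t ≤ t') : decayBound τ cbar lam D₀ t' ≤ decayBound τ cbar lam D₀ t := by
  have hexp : (t : ℝ) / (τ + 1) - 1 ≤ (t' : ℝ) / (τ + 1) - 1 := by gcongr
  exact mul_le_mul_of_nonneg_right (div_le_div_of_nonneg_right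
    (Real.rpow_le_rpow_of_exponent_ge hc0 hc1 hexp) (sub_nonneg.mpr hlam.le)) hD₀

theorem le_decayBound_of_nonpos (hc0 : 0 < cbar) (hc1 : cbar ≤ 1) (hlam0 : 0 ≤ lam)
    (hlam : lam < 1) (hD₀ : 0 ≤ D₀) {t : ℤ} (ht : t ≤ 0) : D₀ ≤ decayBound τ cbar lam D₀ t := by
  have hexp : (t : ℝ) / (τ + 1) - 1 ≤ 0 := by
    have : (t : ℝ) / (τ + 1) ≤ 0 :=
      div_nonpos_of_nonpos_of_nonneg (by exact_mod_cast ht) (by positivity)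
    linarith
  have hone : 1 ≤ cbar ^ ((t : ℝ) / (τ + 1) - 1) / (1 - lam) := by
    rw [one_le_div (by linarith)]
    linarith [Real.one_le_rpow_of_pos_of_le_one_of_nonpos hc0 hc1 hexp]
  exact le_mul_of_one_le_left hD₀ hone

theorem decayBound_natCast_add (hc0 : 0 < cbar) (m : ℕ) (r : ℤ) :
    decayBound τ cbar lam D₀ (m + r) =
      cbar ^ ((r : ℝ) / (τ + 1) - 1) / (1 - lam) * (cbar ^ ((1 : ℝ) / (τ + 1))) ^ m * D₀ := by
  rw [← Real.rpow_natCast, ← Real.rpow_mul hc0.le, div_mul_eq_mul_div, ← Real.rpow_add hc0,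
    decayBound]
  push_cast
  ring_nf

theorem decayBound_eq_rpow_mul (hc0 : 0 < cbar) (r : ℤ) {s : ℕ} (hs : s ≤ τ) (l n : ℕ) :
    decayBound τ cbar lam D₀ ((l * (τ + 1) + τ - s : ℕ) + r) =
      cbar ^ ((l : ℝ) + ((r : ℝ) - s - 1) / (τ + 1) - n + 1) *
        (cbar ^ ((n : ℝ) - 1) / (1 - lam) * D₀) := by
  have hexp : (((l * (τ + 1) + τ - s : ℕ) + r : ℤ) : ℝ) / (τ + 1) - 1 =
      ((l : ℝ) + ((r : ℝ) - s - 1) / (τ + 1) - n + 1) + ((n : ℝ) - 1) := by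
    push_cast [Nat.cast_sub (show s ≤ l * (τ + 1) + τ by nlinarith)]
    field_simp
    ring
  rw [decayBound, hexp, Real.rpow_add hc0]
  ring

theorem rpow_div_mul_le_decayBound (hc0 : 0 < cbar) (hc1 : cbar ≤ 1) (hlam : lam < 1)
    (hD₀ : 0 ≤ D₀) {q n : ℕ} (hqn : q ≤ n * (τ + 1)) :
    cbar ^ ((n : ℝ) - 1) / (1 - lam) * D₀ ≤ decayBound τ cbar lam D₀ q := by
  have hexp : (q : ℝ) / (τ + 1) ≤ n := by
    rw [div_le_iff₀ (by positivity)]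
    exact_mod_cast hqn
  exact mul_le_mul_of_nonneg_right (div_le_div_of_nonneg_right
    (Real.rpow_le_rpow_of_exponent_ge hc0 hc1 (by push_cast; linarith)) (by linarith)) hD₀

end DecayBound

section DelayInequality

variable {τ : ℕ} {r : ℤ} {c H : ℕ → ℝ} {cbar lam : ℝ} {z : ℤ → ℝ}

theorem abs_apply_mul_sub_le
    (hz : ∀ m : ℕ, |z (m + 1)| ≤ |c m| * |z (m - τ)| + H m * ‖history r z m‖)
    {s : ℕ} (hs : s ≤ τ) (n : ℕ) :
    |z ((n * (τ + 1) : ℕ) - s)| ≤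
      (∏ k ∈ range n, |c (k * (τ + 1) + τ - s)|) * |z (-s)| +
        ∑ l ∈ range n, (∏ k ∈ Ico (l + 1) n, |c (k * (τ + 1) + τ - s)|) *
          (H (l * (τ + 1) + τ - s) * ‖history r z (l * (τ + 1) + τ - s : ℕ)‖) := by
  refine (le_prod_mul_add_sum_of_le_mul_add (w := fun n => |z ((n * (τ + 1) : ℕ) - s)|)
    (a := fun k => |c (k * (τ + 1) + τ - s)|)
    (e := fun l => H (l * (τ + 1) + τ - s) * ‖history r z (l * (τ + 1) + τ - s : ℕ)‖)
    (fun _ => abs_nonneg _) (fun n => ?_) n).trans_eq (by simp)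
  have hsucc : (((n + 1) * (τ + 1) : ℕ) : ℤ) - s = ((n * (τ + 1) + τ - s : ℕ) : ℤ) + 1 := by
    push_cast [Nat.cast_sub (show s ≤ n * (τ + 1) + τ by nlinarith)]
    ring
  have hdelay : ((n * (τ + 1) + τ - s : ℕ) : ℤ) - τ = ((n * (τ + 1) : ℕ) : ℤ) - s := by
    push_cast [Nat.cast_sub (show s ≤ n * (τ + 1) + τ by nlinarith)]
    ring
  simpa only [hsucc, hdelay] using hz (n * (τ + 1) + τ - s)

theorem abs_le_decayBound_of_add_eq_mul (hr : r ≤ -τ) (hc0 : 0 < cbar) (hc1 : cbar ≤ 1)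
    (hc : ∀ m, |c m| ≤ cbar) (hH : ∀ m, 0 ≤ H m) (hlam : lam < 1)
    (hz : ∀ m : ℕ, |z (m + 1)| ≤ |c m| * |z (m - τ)| + H m * ‖history r z m‖)
    {q n s : ℕ} (hs : s ≤ τ) (hqs : q + s = n * (τ + 1))
    (hsum : ∑ l ∈ range n, (∏ k ∈ Ico (l + 1) n, |c (k * (τ + 1) + τ - s)|) *
        H (l * (τ + 1) + τ - s) * cbar ^ ((l : ℝ) + ((r : ℝ) - s - 1) / (τ + 1) - n + 1) ≤ lam)
    (hhist : ∀ l < n, ‖history r z (l * (τ + 1) + τ - s : ℕ)‖ ≤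
      decayBound τ cbar lam ‖history r z 0‖ ((l * (τ + 1) + τ - s : ℕ) + r)) :
    |z q| ≤ decayBound τ cbar lam ‖history r z 0‖ q := by
  set D₀ := ‖history r z 0‖
  set A := cbar ^ ((n : ℝ) - 1) / (1 - lam) * D₀
  have hD₀ : 0 ≤ D₀ := norm_nonneg _
  have hA : 0 ≤ A := mul_nonneg (div_nonneg (Real.rpow_nonneg hc0.le _) (by linarith)) hD₀
  have hinit : |z (-s)| ≤ D₀ := by
    simpa using abs_le_norm_history z 0 (by omega : r ≤ -s) (by omega)
  have hprod : ∏ k ∈ range n, |c (k * (τ + 1) + τ - s)| ≤ cbar ^ n := by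
    simpa using prod_le_prod (fun _ _ => abs_nonneg _) fun k (_ : k ∈ range n) => hc _
  have hpow : cbar ^ n ≤ cbar ^ ((n : ℝ) - 1) := by
    rw [← Real.rpow_natCast]
    exact Real.rpow_le_rpow_of_exponent_ge hc0 hc1 (by linarith)
  have hA_mul : A * (1 - lam) = cbar ^ ((n : ℝ) - 1) * D₀ := by
    simp only [A]; field_simp [show 1 - lam ≠ 0 by linarith]
  calc |z q| = |z ((n * (τ + 1) : ℕ) - s)| := by rw [← hqs]; push_cast; ring_nf
    _ ≤ (∏ k ∈ range n, |c (k * (τ + 1) + τ - s)|) * |z (-s)| +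
        ∑ l ∈ range n, (∏ k ∈ Ico (l + 1) n, |c (k * (τ + 1) + τ - s)|) *
          (H (l * (τ + 1) + τ - s) * ‖history r z (l * (τ + 1) + τ - s : ℕ)‖) :=
        abs_apply_mul_sub_le hz hs n
    _ ≤ cbar ^ n * D₀ + ∑ l ∈ range n, (∏ k ∈ Ico (l + 1) n, |c (k * (τ + 1) + τ - s)|) *
          (H (l * (τ + 1) + τ - s) *
            (cbar ^ ((l : ℝ) + ((r : ℝ) - s - 1) / (τ + 1) - n + 1) * A)) := by
        gcongr with l hl
        · exact hH _
        · rw [← decayBound_eq_rpow_mul hc0 r hs l n]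
          exact hhist l (mem_range.mp hl)
    _ = cbar ^ n * D₀ + (∑ l ∈ range n, (∏ k ∈ Ico (l + 1) n, |c (k * (τ + 1) + τ - s)|) *
          H (l * (τ + 1) + τ - s) *
            cbar ^ ((l : ℝ) + ((r : ℝ) - s - 1) / (τ + 1) - n + 1)) * A := by
        simp only [sum_mul, mul_assoc]
    _ ≤ cbar ^ n * D₀ + lam * A := by gcongr
    _ ≤ A := by linarith [mul_le_mul_of_nonneg_right hpow hD₀]
    _ ≤ decayBound τ cbar lam D₀ q := rpow_div_mul_le_decayBound hc0 hc1 hlam hD₀ (by omega)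

theorem norm_history_le_decayBound (hc0 : 0 < cbar) (hc1 : cbar ≤ 1) (hlam : lam < 1) {D₀ : ℝ}
    (hD₀ : 0 ≤ D₀) {m : ℕ} (hz : ∀ t, r ≤ t → t ≤ m → |z t| ≤ decayBound τ cbar lam D₀ t) :
    ‖history r z m‖ ≤ decayBound τ cbar lam D₀ (m + r) :=
  norm_history_le (decayBound_nonneg hc0 hlam hD₀ _) fun j hrj hj =>
    (hz _ (by omega) (by omega)).trans (decayBound_le_of_le hc0 hc1 hlam hD₀ (by omega))

theorem abs_le_decayBound (hr : r ≤ -τ) (hc0 : 0 < cbar) (hc1 : cbar ≤ 1)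
    (hc : ∀ m, |c m| ≤ cbar) (hH : ∀ m, 0 ≤ H m) (hlam0 : 0 ≤ lam) (hlam : lam < 1)
    (hlamSum : ∀ s : ℕ, s ≤ τ → ∀ n : ℕ, 1 ≤ n →
      ∑ l ∈ range n, (∏ k ∈ Ico (l + 1) n, |c (k * (τ + 1) + τ - s)|) *
        H (l * (τ + 1) + τ - s) * cbar ^ ((l : ℝ) + ((r : ℝ) - s - 1) / (τ + 1) - n + 1) ≤ lam)
    (hz : ∀ m : ℕ, |z (m + 1)| ≤ |c m| * |z (m - τ)| + H m * ‖history r z m‖) (q : ℕ) :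
    ∀ t, r ≤ t → t ≤ q → |z t| ≤ decayBound τ cbar lam ‖history r z 0‖ t := by
  have hD₀ : 0 ≤ ‖history r z 0‖ := norm_nonneg _
  induction q with
  | zero =>
    intro t hrt ht
    have hinit : |z t| ≤ ‖history r z 0‖ := by simpa using abs_le_norm_history z 0 hrt ht
    exact hinit.trans (le_decayBound_of_nonpos hc0 hc1 hlam0 hlam hD₀ ht)
  | succ q ih =>
    intro t hrt ht
    obtain ht | rfl := (Int.le_iff_lt_or_eq.mp ht)
    · exact ih t hrt (by omega)
    obtain ⟨n, s, hs, hqs⟩ := exists_add_eq_mul_succ (q + 1) τ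
    have hn : 1 ≤ n := by
      rcases n with _ | _ <;> simp_all
    refine abs_le_decayBound_of_add_eq_mul hr hc0 hc1 hc hH hlam hz hs hqs (hlamSum s hs n hn)
      fun l hl => norm_history_le_decayBound hc0 hc1 hlam hD₀ fun t hrt ht => ih t hrt ?_
    have : (l + 1) * (τ + 1) ≤ n * (τ + 1) := Nat.mul_le_mul_right _ hl
    rw [add_one_mul] at this
    omega

end DelayInequality

/-- scalar case of Theorem 2.2 (the main stability theorem). -/
theorem main_stability_theorem_scalar
    (τ : ℕ) (r : ℤ) (hr : r ≤ -(τ : ℤ))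
    (c : ℕ → ℝ) (cbar : ℝ) (hc0 : 0 < cbar) (hc1 : cbar ≤ 1)
    (hc : ∀ m, |c m| ≤ cbar)
    (h : ℕ → ((Finset.Icc r (0 : ℤ)) → ℝ) → ℝ) (H : ℕ → ℝ)
    (hLip : ∀ (m : ℕ) (α β : (Finset.Icc r (0 : ℤ)) → ℝ),
      |h m α - h m β| ≤ H m * ‖α - β‖)
    (lam : ℝ) (hlam : lam < 1)
    (hlamSum : ∀ s : ℕ, s ≤ τ → ∀ n : ℕ, 1 ≤ n →
      (∑ l ∈ Finset.range n,
        (∏ k ∈ Finset.Ico (l + 1) n, |c (k * (τ + 1) + τ - s)|) *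
          H (l * (τ + 1) + τ - s) *
          cbar ^ ((l : ℝ) + ((r : ℝ) - s - 1) / (τ + 1) - n + 1)) ≤ lam)
    (x y : ℤ → ℝ)
    (hx : ∀ m : ℕ, x ((m : ℤ) + 1) =
      c m * x ((m : ℤ) - τ) + h m (fun j => x ((m : ℤ) + (j : ℤ))))
    (hy : ∀ m : ℕ, y ((m : ℤ) + 1) =
      c m * y ((m : ℤ) - τ) + h m (fun j => y ((m : ℤ) + (j : ℤ)))) :
    ∀ m : ℕ,
      ‖(fun j : (Finset.Icc r (0 : ℤ)) => x ((m : ℤ) + (j : ℤ))) -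
          (fun j : (Finset.Icc r (0 : ℤ)) => y ((m : ℤ) + (j : ℤ)))‖ ≤
        cbar ^ ((r : ℝ) / (τ + 1) - 1) / (1 - lam) *
          (cbar ^ ((1 : ℝ) / (τ + 1))) ^ m *
          ‖(fun j : (Finset.Icc r (0 : ℤ)) => x (j : ℤ)) -
              (fun j : (Finset.Icc r (0 : ℤ)) => y (j : ℤ))‖ := by
  have : Nonempty (Icc r (0 : ℤ)) := ⟨⟨0, mem_Icc.mpr ⟨by omega, le_rfl⟩⟩⟩
  have hH : ∀ m, 0 ≤ H m := fun m => nonneg_of_abs_sub_le_mul_norm (hLip m)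
  have hlam0 : 0 ≤ lam := le_trans (by simpa using mul_nonneg (hH _) (Real.rpow_nonneg hc0.le _))
    (hlamSum 0 τ.zero_le 1 le_rfl)
  have hz := abs_sub_apply_succ_le hLip hx hy
  have hinit : history r (x - y) 0 =
      (fun j : Icc r (0 : ℤ) => x j) - (fun j : Icc r (0 : ℤ) => y j) := by
    ext j; simp [history]
  intro m
  have hbound := norm_history_le_decayBound hc0 hc1 hlam (norm_nonneg _)
    (abs_le_decayBound hr hc0 hc1 hc hH hlam0 hlam hlamSum hz m)
  rwa [decayBound_natCast_add hc0, hinit] at hbound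
end
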